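/- If H is an infinite discrete subgroup of the isometry group of the Euclidean plane ℝ², then H contains a nontrivial translation or a glide reflection (an orientation-reversing isometry whose square is a nontrivial translation). -/

import Mathlib

/-!
If `H` contained no nontrivial translation, an element of `H` would be determined by its linear
part. The orientation-preserving elements of `H` form a subgroup of index at most two, hence an
infinite one, and their linear parts are rotations; rotations commute, so these elements commute
with each other. A nontrivial one, `g`, has a unique fixed point `p`, and every element commuting
with `g` permutes the fixed points of `g`, so all of them fix `p`. But only finitely many elements
of a discrete group fix `p`: among infinitely many, two, `f₁ ≠ f₂`, would have close linear parts
(these lie in a compact set), and then `f₁⁻¹ * f₂` fixes `p` and moves every point of a given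
compact set very little, so it lies in any prescribed neighbourhood of the identity.
-/

noncomputable section

/-- The Euclidean plane. -/
abbrev Plane := EuclideanSpace ℝ (Fin 2)

/-- The isometry group of the Euclidean plane. -/
abbrev Isom := Plane ≃ᵢ Plane

/-- The compact-open topology on the isometry group. -/
instance : TopologicalSpace Isom :=
  TopologicalSpace.induced (fun f => (⟨f, f.continuous⟩ : C(Plane, Plane))) ContinuousMap.compactOpen

/-- A (nontrivial) translation: `x ↦ x + v` with `v ≠ 0`. -/
def IsTranslation (f : Isom) : Prop := ∃ v : Plane, v ≠ 0 ∧ ∀ x, f x = x + v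

/-- The linear part of an isometry of the plane (via Mazur–Ulam). -/
def linPart (f : Isom) : Plane ≃ₗᵢ[ℝ] Plane := f.toRealAffineIsometryEquiv.linearIsometryEquiv

/-- An isometry is orientation-reversing if its linear part has determinant `-1`. -/
def IsOrientationReversing (f : Isom) : Prop :=
  LinearMap.det ((linPart f).toLinearEquiv : Plane →ₗ[ℝ] Plane) = -1

/-- A glide reflection: an orientation-reversing isometry whose square is a
nontrivial translation. -/
def IsGlide (f : Isom) : Prop := IsOrientationReversing f ∧ IsTranslation (f * f)


open Module Topology
open scoped EuclideanSpace

section TwoDim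

variable {V : Type*} [NormedAddCommGroup V] [InnerProductSpace ℝ V] [Fact (finrank ℝ V = 2)]

attribute [local instance] FiniteDimensional.of_fact_finrank_eq_two

theorem LinearIsometryEquiv.commute_of_det_pos {f g : V ≃ₗᵢ[ℝ] V}
    (hf : 0 < LinearMap.det (f.toLinearEquiv : V →ₗ[ℝ] V))
    (hg : 0 < LinearMap.det (g.toLinearEquiv : V →ₗ[ℝ] V)) : Commute f g := by
  let o : Orientation ℝ V (Fin 2) := (finBasisOfFinrankEq ℝ V Fact.out).orientation
  obtain ⟨θ, rfl⟩ := o.exists_linearIsometryEquiv_eq_of_det_pos hf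
  obtain ⟨φ, rfl⟩ := o.exists_linearIsometryEquiv_eq_of_det_pos hg
  change (o.rotation φ).trans (o.rotation θ) = (o.rotation θ).trans (o.rotation φ)
  rw [o.rotation_trans, o.rotation_trans, add_comm]

theorem LinearIsometryEquiv.eq_zero_of_apply_eq_self_of_det_pos {f : V ≃ₗᵢ[ℝ] V}
    (hf : 0 < LinearMap.det (f.toLinearEquiv : V →ₗ[ℝ] V)) (hf₁ : f ≠ 1) {v : V}
    (hv : f v = v) : v = 0 := by
  let o : Orientation ℝ V (Fin 2) := (finBasisOfFinrankEq ℝ V Fact.out).orientation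
  obtain ⟨θ, rfl⟩ := o.exists_linearIsometryEquiv_eq_of_det_pos hf
  refine ((o.rotation_eq_self_iff v θ).1 hv).resolve_right ?_
  rintro rfl
  exact hf₁ o.rotation_zero

end TwoDim

theorem linPart_apply_sub (f : Isom) (x y : Plane) : linPart f (x - y) = f x - f y := by
  simpa [linPart] using f.toRealAffineIsometryEquiv.map_vsub x y

theorem apply_eq_linPart_add (f : Isom) (x : Plane) : f x = linPart f x + f 0 := by
  rw [← sub_zero x, linPart_apply_sub, sub_zero, sub_add_cancel]

def linPartHom : Isom →* (Plane ≃ₗᵢ[ℝ] Plane) where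
  toFun := linPart
  map_one' := LinearIsometryEquiv.ext fun x => by
    simpa using linPart_apply_sub 1 x 0
  map_mul' f g := LinearIsometryEquiv.ext fun x => by
    rw [← sub_zero x, linPart_apply_sub, LinearIsometryEquiv.coe_mul, Function.comp_apply,
      linPart_apply_sub, linPart_apply_sub]
    rfl

@[simp]
theorem linPartHom_apply (f : Isom) : linPartHom f = linPart f := rfl

theorem isTranslation_or_eq_one_of_linPart_eq_one {f : Isom} (h : linPart f = 1) :
    IsTranslation f ∨ f = 1 := by
  have hf : ∀ x, f x = x + f 0 := fun x => by rw [apply_eq_linPart_add, h]; rfl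
  by_cases h0 : f 0 = 0
  · exact .inr (IsometryEquiv.ext fun x => by rw [hf, h0, add_zero]; rfl)
  · exact .inl ⟨f 0, h0, hf⟩

theorem injOn_linPart {H : Subgroup Isom} (hH : ∀ f ∈ H, ¬ IsTranslation f) :
    Set.InjOn linPart H := by
  intro f hf g hg hfg
  refine inv_mul_eq_one.1 <| (isTranslation_or_eq_one_of_linPart_eq_one ?_).resolve_left
    (hH _ (H.mul_mem (H.inv_mem hf) hg))
  rw [← linPartHom_apply, map_mul, map_inv, linPartHom_apply, linPartHom_apply, hfg,
    inv_mul_cancel]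

theorem exists_apply_eq_self_of_linPart {f : Isom} (h : ∀ v, linPart f v = v → v = 0) :
    ∃ p, f p = p := by
  have hinj : Function.Injective
      ((LinearMap.id : Plane →ₗ[ℝ] Plane) - (linPart f).toLinearEquiv.toLinearMap) := by
    rw [← LinearMap.ker_eq_bot, LinearMap.ker_eq_bot']
    intro v hv
    exact h v (sub_eq_zero.1 hv).symm
  obtain ⟨p, hp⟩ := (LinearMap.injective_iff_surjective.1 hinj) (f 0)
  refine ⟨p, ?_⟩
  rw [apply_eq_linPart_add, ← hp]
  simp

theorem eq_of_apply_eq_self_of_linPart {f : Isom} (h : ∀ v, linPart f v = v → v = 0) {p q : Plane}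
    (hp : f p = p) (hq : f q = q) : p = q := by
  have := h (q - p) (by rw [linPart_apply_sub, hp, hq])
  exact (sub_eq_zero.1 this).symm

def orientationPreserving : Subgroup Isom :=
  (Units.posSubgroup ℝ).comap <| LinearEquiv.det.comp <|
    ({ toFun := LinearIsometryEquiv.toLinearEquiv, map_one' := rfl, map_mul' := fun _ _ => rfl } :
      (Plane ≃ₗᵢ[ℝ] Plane) →* (Plane ≃ₗ[ℝ] Plane)).comp linPartHom

theorem mem_orientationPreserving {f : Isom} :
    f ∈ orientationPreserving ↔
      0 < LinearMap.det ((linPart f).toLinearEquiv : Plane →ₗ[ℝ] Plane) := by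
  simp [orientationPreserving, LinearEquiv.coe_det]
  rfl

instance : orientationPreserving.FiniteIndex := by
  have : (Units.posSubgroup ℝ).FiniteIndex := ⟨by simp [Units.index_posSubgroup]⟩
  rw [Subgroup.finiteIndex_iff, orientationPreserving, Subgroup.index_comap,
    ← Subgroup.isFiniteRelIndex_iff_relIndex_ne_zero]
  exact Subgroup.isFiniteRelIndex_of_finiteIndex

theorem Subgroup.finite_of_finite_inf {G : Type*} [Group G] {H K : Subgroup G} [K.FiniteIndex]
    (h : Finite ↥(H ⊓ K)) : Finite H := by
  rw [Subgroup.finite_iff_finite_and_finiteIndex (K.subgroupOf H)]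
  refine ⟨?_, inferInstance⟩
  rw [← Subgroup.inf_subgroupOf_left]
  exact Finite.of_equiv _ (Subgroup.subgroupOfEquivOfLe inf_le_left).toEquiv.symm

theorem exists_forall_apply_eq_self {S : Subgroup Isom} (hS : S ≤ orientationPreserving)
    (hnt : ∀ f ∈ S, ¬ IsTranslation f) (hne : S ≠ ⊥) : ∃ p, ∀ f ∈ S, f p = p := by
  obtain ⟨g, hgS, hg⟩ := S.bot_or_exists_ne_one.resolve_left hne
  have hg_lin : ∀ v, linPart g v = v → v = 0 := by
    refine fun v => LinearIsometryEquiv.eq_zero_of_apply_eq_self_of_det_pos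
      (mem_orientationPreserving.1 (hS hgS)) fun h => hg ?_
    exact (isTranslation_or_eq_one_of_linPart_eq_one h).resolve_left (hnt g hgS)
  obtain ⟨p, hp⟩ := exists_apply_eq_self_of_linPart hg_lin
  refine ⟨p, fun f hf => eq_of_apply_eq_self_of_linPart hg_lin hp ?_ |>.symm⟩
  have hcomm : f * g = g * f := by
    refine injOn_linPart hnt (S.mul_mem hf hgS) (S.mul_mem hgS hf) ?_
    simp only [← linPartHom_apply, map_mul]
    exact (LinearIsometryEquiv.commute_of_det_pos (mem_orientationPreserving.1 (hS hf))
      (mem_orientationPreserving.1 (hS hgS))).eq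
  rw [← IsometryEquiv.mul_apply, ← hcomm, IsometryEquiv.mul_apply, hp]

theorem LinearIsometryEquiv.norm_inv_mul_apply_sub {R E : Type*} [Semiring R]
    [SeminormedAddCommGroup E] [Module R E] (A B : E ≃ₗᵢ[R] E) (x : E) :
    ‖(A⁻¹ * B) x - x‖ = ‖B x - A x‖ := by
  rw [← A.norm_map, map_sub, LinearIsometryEquiv.coe_mul, Function.comp_apply,
    LinearIsometryEquiv.coe_inv, LinearIsometryEquiv.apply_symm_apply]

theorem TotallyBounded.exists_ne_dist_lt {X ι : Type*} [PseudoMetricSpace X] [Infinite ι]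
    {s : Set X} (hs : TotallyBounded s) {u : ι → X} (hu : ∀ i, u i ∈ s) {ε : ℝ} (hε : 0 < ε) :
    ∃ i j, i ≠ j ∧ dist (u i) (u j) < ε := by
  obtain ⟨t, ht, hcover⟩ := Metric.totallyBounded_iff.1 hs (ε / 2) (half_pos hε)
  have hnear : ∀ i, ∃ y : t, dist (u i) y < ε / 2 := fun i => by
    simpa using hcover (hu i)
  choose c hc using hnear
  have := ht.to_subtype
  obtain ⟨i, j, hij, hcij⟩ := Finite.exists_ne_map_eq_of_infinite c
  refine ⟨i, j, hij, ?_⟩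
  calc dist (u i) (u j) ≤ dist (u i) (c i) + dist (u j) (c j) := by
        rw [hcij]; exact dist_triangle_right _ _ _
    _ < ε / 2 + ε / 2 := add_lt_add (hc i) (hc j)
    _ = ε := add_halves ε

theorem exists_pos_forall_mem_of_mem_nhds_one {U : Set Isom} (hU : U ∈ 𝓝 1) (p : Plane) :
    ∃ δ > 0, ∀ g : Isom, g p = p → (∀ x, ‖linPart g x - x‖ ≤ δ * ‖x‖) → g ∈ U := by
  rw [nhds_induced] at hU
  obtain ⟨W, hW, hWU⟩ := hU
  obtain ⟨V, hV, hVW⟩ := UniformSpace.mem_nhds_iff.1 hW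
  obtain ⟨K, V₀, hK, hV₀, hKV⟩ := (ContinuousMap.mem_compactConvergence_entourage_iff _).1 hV
  obtain ⟨ε, hε, hεV₀⟩ := Metric.mem_uniformity_dist.1 hV₀
  obtain ⟨r, hr⟩ := hK.isBounded.subset_closedBall p
  refine ⟨ε / (|r| + 1), by positivity, fun g hgp hg => hWU (hVW (hKV fun x hx => hεV₀ ?_))⟩
  have hxr : ‖x - p‖ ≤ |r| := (mem_closedBall_iff_norm.1 (hr hx)).trans (le_abs_self r)
  calc dist x (g x) = ‖linPart g (x - p) - (x - p)‖ := by
        rw [dist_comm, dist_eq_norm, linPart_apply_sub, hgp, sub_sub_sub_cancel_right]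
    _ ≤ ε / (|r| + 1) * ‖x - p‖ := hg _
    _ ≤ ε / (|r| + 1) * |r| := by gcongr
    _ < ε := by
        rw [div_mul_eq_mul_div, div_lt_iff₀ (by positivity)]
        nlinarith [abs_nonneg r]

theorem finite_setOf_mem_and_apply_eq_self (H : Subgroup Isom) [DiscreteTopology H] (p : Plane) :
    {f | f ∈ H ∧ f p = p}.Finite := by
  obtain ⟨U, hUo, hUH⟩ := discreteTopology_subtype_iff'.1 ‹DiscreteTopology H› 1 H.one_mem
  obtain ⟨⟨h1U, -⟩, hUH⟩ := Set.eq_singleton_iff_unique_mem.1 hUH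
  obtain ⟨δ, hδ, hδU⟩ := exists_pos_forall_mem_of_mem_nhds_one (hUo.mem_nhds h1U) p
  by_contra hinf
  have := Set.infinite_coe_iff.2 hinf
  let L : {f | f ∈ H ∧ f p = p} → Plane →L[ℝ] Plane := fun f =>
    (linPart f).toLinearIsometry.toContinuousLinearMap
  have hL : ∀ f, L f ∈ Metric.closedBall 0 1 := fun f =>
    mem_closedBall_zero_iff.2 (linPart f).toLinearIsometry.norm_toContinuousLinearMap_le
  obtain ⟨⟨f, hfH, hfp⟩, ⟨g, hgH, hgp⟩, hfg, hLfg⟩ :=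
    (isCompact_closedBall (0 : Plane →L[ℝ] Plane) 1).totallyBounded.exists_ne_dist_lt hL hδ
  refine hfg (Subtype.ext (inv_mul_eq_one.1 (hUH _ ⟨?_, H.mul_mem (H.inv_mem hfH) hgH⟩)))
  have hfgp : (f⁻¹ * g) p = p := by
    rw [IsometryEquiv.mul_apply, hgp]
    nth_rw 1 [← hfp]
    exact f.inv_apply_self p
  refine hδU _ hfgp fun x => ?_
  calc ‖linPart (f⁻¹ * g) x - x‖ = ‖(L ⟨g, hgH, hgp⟩ - L ⟨f, hfH, hfp⟩) x‖ := by
        rw [← linPartHom_apply, map_mul, map_inv, LinearIsometryEquiv.norm_inv_mul_apply_sub]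
        rfl
    _ ≤ ‖L ⟨g, hgH, hgp⟩ - L ⟨f, hfH, hfp⟩‖ * ‖x‖ := ContinuousLinearMap.le_opNorm _ _
    _ ≤ δ * ‖x‖ := by
        rw [← dist_eq_norm, dist_comm]
        gcongr

/-- An infinite discrete subgroup of `Isom(ℝ²)` contains a nontrivial translation
or a glide reflection. -/
theorem infinite_discrete_subgroup_contains_translation_or_glide
    (H : Subgroup Isom) (hinf : Infinite H) (hdisc : DiscreteTopology H) :
    ∃ f ∈ H, IsTranslation f ∨ IsGlide f := by
  by_contra! hH
  have hS : Infinite ↥(H ⊓ orientationPreserving) := by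
    by_contra! hfin
    exact (Subgroup.finite_of_finite_inf hfin).false
  obtain ⟨p, hp⟩ := exists_forall_apply_eq_self inf_le_right (fun f hf => (hH f hf.1).1)
    ((Subgroup.nontrivial_iff_ne_bot _).1 inferInstance)
  have hfin : Finite ↥(H ⊓ orientationPreserving) :=
    ((finite_setOf_mem_and_apply_eq_self H p).subset fun f hf => ⟨hf.1, hp f hf⟩).to_subtype
  exact hfin.false

end
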